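/- arXiv:1108.3860 — 2 statements merged into one kernel-verified Lean document; each statement's English description precedes it below -/
import Mathlib

section
/- Carry-propagation shift lemma: let i < j be natural numbers and let x be a natural number such that Nat.testBit x k = false for all k with i < k ≤ j (all bits strictly between i and j, and bit j, are zero). Then ((x + (2^j - 2^i)) &&& 2^j) equals 2^j if bit i of x is 1, and equals 0 if bit i of x is 0. -/
/-! Since bits `i+1, …, j` of `x` vanish, `x ≡ b [MOD 2^(j+1)]` with `b := x % 2^(i+1) < 2^(i+1)`.
Then `b + (2^j - 2^i) < 2^(j+1)` has bit `j` set exactly when `2^i ≤ b`, i.e. when bit `i` of `x`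
is set: the carry out of position `i` runs through the zero window up to position `j`. -/

namespace Nat

theorem mod_two_pow_eq_mod_two_pow_of_testBit_eq_false {x m n : ℕ} (hmn : m ≤ n)
    (h : ∀ k, m ≤ k → k < n → x.testBit k = false) : x % 2 ^ n = x % 2 ^ m := by
  refine eq_of_testBit_eq fun k => ?_
  simp only [testBit_mod_two_pow]
  by_cases hkm : k < m
  · simp [hkm, show k < n by omega]
  · by_cases hkn : k < n
    · simp [hkm, h k (not_lt.mp hkm) hkn]
    · simp [hkm, hkn]

theorem testBit_eq_of_modEq {x y n : ℕ} (h : x ≡ y [MOD 2 ^ (n + 1)]) :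
    x.testBit n = y.testBit n := by
  simpa using congrArg (testBit · n) h

theorem testBit_eq_decide_two_pow_le {y n : ℕ} (hy : y < 2 ^ (n + 1)) :
    y.testBit n = decide (2 ^ n ≤ y) := by
  by_cases h : 2 ^ n ≤ y
  · simp [h, testBit_of_two_pow_le_and_two_pow_add_one_gt h hy]
  · simp [h, testBit_lt_two_pow (not_le.mp h)]

theorem testBit_add_two_pow_sub_two_pow {b i j : ℕ} (hij : i < j) (hb : b < 2 ^ (i + 1)) :
    (b + (2 ^ j - 2 ^ i)).testBit j = b.testBit i := by
  have hi : 2 ^ (i + 1) = 2 ^ i + 2 ^ i := by rw [pow_succ]; ring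
  have hj : 2 ^ (j + 1) = 2 ^ j + 2 ^ j := by rw [pow_succ]; ring
  have hij' : 2 ^ (i + 1) ≤ 2 ^ j := pow_le_pow_right₀ one_le_two hij
  rw [testBit_eq_decide_two_pow_le hb, testBit_eq_decide_two_pow_le (by omega)]
  exact decide_eq_decide.mpr (by omega)

end Nat

theorem stmt_4 (i j x : ℕ) (hij : i < j)
    (hz : ∀ k, i < k → k ≤ j → Nat.testBit x k = false) :
    (x + (2 ^ j - 2 ^ i)) &&& 2 ^ j = if Nat.testBit x i then 2 ^ j else 0 := by
  set b := x % 2 ^ (i + 1)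
  have hb : b < 2 ^ (i + 1) := Nat.mod_lt _ (by positivity)
  have hxb : x ≡ b [MOD 2 ^ (j + 1)] := by
    have hbj : b < 2 ^ (j + 1) := hb.trans_le (Nat.pow_le_pow_right two_pos (by omega))
    rw [Nat.ModEq, Nat.mod_eq_of_lt hbj]
    exact Nat.mod_two_pow_eq_mod_two_pow_of_testBit_eq_false (by omega)
      fun k hik hkj => hz k hik (by omega)
  have hbit : (x + (2 ^ j - 2 ^ i)).testBit j = x.testBit i := by
    rw [Nat.testBit_eq_of_modEq (hxb.add_right _), Nat.testBit_add_two_pow_sub_two_pow hij hb]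
    simp [b]
  rw [Nat.and_two_pow, hbit]
  cases x.testBit i <;> simp
end

section
/- For any natural x < 2^62, the HAKMEM-169 computation returns ν(x): let b1 = (x >>> 1) &&& T, a1 = x - b1, b2 = (b1 >>> 1) &&& T, a2 = a1 - b2, a3 = (a2 + (a2 >>> 3)) &&& H; then a3 mod 63 = ν(x), where T is the 62-bit mask with binary pattern 011 repeated (octal 3 in every digit ... i.e., bits set at positions ≢ 2 mod 3: T = sum over k of 3 * 8^k truncated to 62 bits) and H is the mask with octal digits 07 alternating (binary 000111 repeated: H = sum over k of 7 * 64^k truncated to 62 bits). -/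
/-!
Write `x` in octal. The masked shifts `(x >>> 1) &&& T` and `(b >>> 1) &&& T` act digitwise,
replacing each octal digit `d` by `⌊d/2⌋` and then `⌊d/4⌋`; as these never exceed `d`, the
subtractions borrow nothing, and `d - ⌊d/2⌋ - ⌊d/4⌋ = ν(d)` leaves `ν(d_k)` in the `k`-th digit.
Adding the copy shifted by one digit and masking with `H` leaves the base-64 digits
`ν(d_{2j}) + ν(d_{2j+1}) ≤ 6`. Since `64 ≡ 1 [MOD 63]`, reducing mod 63 adds these digits up
to `ν(x) ≤ 62`.
-/

def nu (n : ℕ) : ℕ := (Nat.bits n).count true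

open Finset

section Expansion

variable {B : ℕ} {u : ℕ → ℕ}

theorem sum_range_succ_mul_pow (B : ℕ) (u : ℕ → ℕ) (n : ℕ) :
    ∑ k ∈ range (n + 1), u k * B ^ k = u 0 + B * ∑ k ∈ range n, u (k + 1) * B ^ k := by
  rw [sum_range_succ', mul_sum, add_comm]
  simp only [pow_succ', pow_zero, mul_one, mul_left_comm]

theorem sum_range_two_mul (f : ℕ → ℕ) (n : ℕ) :
    ∑ k ∈ range (2 * n), f k = ∑ j ∈ range n, (f (2 * j) + f (2 * j + 1)) := by
  induction n with
  | zero => simp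
  | succ n ih => rw [mul_add_one, sum_range_succ, sum_range_succ, sum_range_succ, ih, add_assoc]

theorem sum_mul_pow_lt (hu : ∀ k, u k < B) (n : ℕ) : ∑ k ∈ range n, u k * B ^ k < B ^ n := by
  induction n with
  | zero => simp
  | succ n ih =>
    calc ∑ k ∈ range (n + 1), u k * B ^ k < B ^ n + u n * B ^ n := by
          rw [sum_range_succ]; exact Nat.add_lt_add_right ih _
      _ = (u n + 1) * B ^ n := by ring
      _ ≤ B ^ (n + 1) := by rw [pow_succ']; exact Nat.mul_le_mul_right _ (hu n)

theorem sum_range_succ_mul_pow_div (hu : ∀ k, u k < B) (n : ℕ) :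
    (∑ k ∈ range (n + 1), u k * B ^ k) / B = ∑ k ∈ range n, u (k + 1) * B ^ k := by
  rw [sum_range_succ_mul_pow, Nat.add_mul_div_left _ _ (Nat.zero_lt_of_lt (hu 0)),
    Nat.div_eq_of_lt (hu 0), zero_add]

theorem sum_mul_pow_div_pow_mod (hu : ∀ k, u k < B) {m n : ℕ} (hmn : m < n) :
    (∑ k ∈ range n, u k * B ^ k) / B ^ m % B = u m := by
  induction m generalizing n u with
  | zero =>
    obtain ⟨n, rfl⟩ : ∃ n', n = n' + 1 := ⟨n - 1, by omega⟩
    rw [sum_range_succ_mul_pow, pow_zero, Nat.div_one, Nat.add_mul_mod_self_left,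
      Nat.mod_eq_of_lt (hu 0)]
  | succ m ih =>
    obtain ⟨n, rfl⟩ : ∃ n', n = n' + 1 := ⟨n - 1, by omega⟩
    rw [pow_succ', ← Nat.div_div_eq_div_mul, sum_range_succ_mul_pow_div hu]
    exact ih (fun k => hu (k + 1)) (by omega)

theorem sum_div_pow_mod_mul_pow (hB : 0 < B) {n x : ℕ} (hx : x < B ^ n) :
    ∑ k ∈ range n, x / B ^ k % B * B ^ k = x := by
  induction n generalizing x with
  | zero => simp_all
  | succ n ih =>
    have hxB : x / B < B ^ n := by
      rw [Nat.div_lt_iff_lt_mul hB, ← pow_succ]; exact hx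
    simp only [sum_range_succ_mul_pow, pow_succ', ← Nat.div_div_eq_div_mul, pow_zero, Nat.div_one]
    rw [ih hxB, Nat.mod_add_div]

theorem sum_mul_pow_modEq_sum (hB : 1 ≤ B) (u : ℕ → ℕ) (n : ℕ) :
    ∑ k ∈ range n, u k * B ^ k ≡ ∑ k ∈ range n, u k [MOD B - 1] := by
  refine Nat.ModEq.sum fun k _ => ?_
  simpa using ((Nat.modEq_sub hB).pow k).mul_left (u k)

end Expansion

section Bitwise

variable {m : ℕ}

theorem two_pow_mul_add_and_two_pow_mul_add {a c : ℕ} (ha : a < 2 ^ m) (hc : c < 2 ^ m)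
    (s t : ℕ) : (2 ^ m * s + a) &&& (2 ^ m * t + c) = 2 ^ m * (s &&& t) + (a &&& c) := by
  apply Nat.eq_of_testBit_eq
  intro i
  simp only [Nat.testBit_two_pow_mul_add _ ha, Nat.testBit_two_pow_mul_add _ hc,
    Nat.testBit_two_pow_mul_add _ (Nat.and_lt_two_pow a hc), Nat.testBit_and]
  split_ifs <;> rfl

theorem sum_mul_pow_and_sum_mul_pow {B : ℕ} (hB : B = 2 ^ m) {u v : ℕ → ℕ}
    (hu : ∀ k, u k < B) (hv : ∀ k, v k < B) (n : ℕ) :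
    (∑ k ∈ range n, u k * B ^ k) &&& (∑ k ∈ range n, v k * B ^ k)
      = ∑ k ∈ range n, (u k &&& v k) * B ^ k := by
  subst hB
  induction n generalizing u v with
  | zero => simp
  | succ n ih =>
    simp only [sum_range_succ_mul_pow]
    rw [add_comm (u 0), add_comm (v 0), add_comm (u 0 &&& v 0),
      two_pow_mul_add_and_two_pow_mul_add (hu 0) (hv 0),
      ih (fun k => hu (k + 1)) (fun k => hv (k + 1))]

end Bitwise

theorem nu_two_mul (q : ℕ) : nu (2 * q) = nu q := by
  rcases Nat.eq_zero_or_pos q with rfl | hq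
  · rfl
  · simp [nu, Nat.bit0_bits q hq.ne']

theorem nu_two_mul_add_one (q : ℕ) : nu (2 * q + 1) = nu q + 1 := by
  simp [nu, Nat.bit1_bits]

theorem nu_add_two_pow_mul {m a : ℕ} (ha : a < 2 ^ m) (q : ℕ) :
    nu (a + 2 ^ m * q) = nu a + nu q := by
  induction m generalizing a with
  | zero => simp_all [show nu 0 = 0 from rfl]
  | succ m ih =>
    have hdiv := ih (a := a / 2) (by omega)
    rcases Nat.even_or_odd' a with ⟨b, rfl | rfl⟩
    · rw [show 2 * b + 2 ^ (m + 1) * q = 2 * (b + 2 ^ m * q) by ring, nu_two_mul, nu_two_mul]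
      simpa using hdiv
    · rw [show 2 * b + 1 + 2 ^ (m + 1) * q = 2 * (b + 2 ^ m * q) + 1 by ring,
        nu_two_mul_add_one, nu_two_mul_add_one]
      simp only [show (2 * b + 1) / 2 = b by omega] at hdiv
      omega

theorem nu_sum_mul_pow {m B : ℕ} (hB : B = 2 ^ m) {u : ℕ → ℕ} (hu : ∀ k, u k < B) (n : ℕ) :
    nu (∑ k ∈ range n, u k * B ^ k) = ∑ k ∈ range n, nu (u k) := by
  subst hB
  induction n generalizing u with
  | zero => rfl
  | succ n ih =>
    rw [sum_range_succ_mul_pow, nu_add_two_pow_mul (hu 0), ih (fun k => hu (k + 1)),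
      sum_range_succ']
    ring

theorem nu_eq_sum_nu_digit {m B n x : ℕ} (hB : B = 2 ^ m) (hx : x < B ^ n) :
    nu x = ∑ k ∈ range n, nu (x / B ^ k % B) := by
  have hB0 : 0 < B := hB ▸ Nat.two_pow_pos m
  conv_lhs => rw [← sum_div_pow_mod_mul_pow hB0 hx]
  exact nu_sum_mul_pow hB (fun k => Nat.mod_lt _ hB0) n

theorem nu_le_of_lt_two_pow {x m : ℕ} (hx : x < 2 ^ m) : nu x ≤ m :=
  calc nu x ≤ x.bits.length := List.count_le_length
    _ = x.size := Nat.size_eq_bits_len x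
    _ ≤ m := Nat.size_le.2 hx

theorem nu_eq_sub_div_two_sub_div_four : ∀ d < 8, nu d = d - d / 2 - d / 4 := by decide

theorem shiftRight_one_and_sum_three_mul_eight_pow {n y : ℕ} (hy : y < 8 ^ n) :
    (y >>> 1) &&& ∑ k ∈ range n, 3 * 8 ^ k = ∑ k ∈ range n, y / 8 ^ k % 8 / 2 * 8 ^ k := by
  have hy2 : y / 2 < 8 ^ n := (Nat.div_le_self y 2).trans_lt hy
  rw [Nat.shiftRight_eq_div_pow, pow_one, ← sum_div_pow_mod_mul_pow (by norm_num) hy2,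
    sum_mul_pow_and_sum_mul_pow (show 8 = 2 ^ 3 by norm_num)
      (fun k => Nat.mod_lt _ (by norm_num)) (fun _ => by norm_num)]
  refine sum_congr rfl fun k _ => ?_
  have hand : ∀ w, w &&& 3 = w % 4 := fun w => Nat.and_two_pow_sub_one_eq_mod w 2
  rw [hand, Nat.div_div_eq_div_mul, Nat.mul_comm 2, ← Nat.div_div_eq_div_mul]
  congr 1
  omega

theorem sub_shiftRight_and_sub_eq_sum_nu_digit_mul {n x : ℕ} (hx : x < 8 ^ n) :
    x - ((x >>> 1) &&& ∑ k ∈ range n, 3 * 8 ^ k)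
      - ((((x >>> 1) &&& ∑ k ∈ range n, 3 * 8 ^ k) >>> 1) &&& ∑ k ∈ range n, 3 * 8 ^ k)
      = ∑ k ∈ range n, nu (x / 8 ^ k % 8) * 8 ^ k := by
  set d : ℕ → ℕ := fun k => x / 8 ^ k % 8
  have hd8 : ∀ k, d k < 8 := fun k => Nat.mod_lt _ (by norm_num)
  have hhalf := shiftRight_one_and_sum_three_mul_eight_pow hx
  have hquarter : (((x >>> 1) &&& ∑ k ∈ range n, 3 * 8 ^ k) >>> 1) &&& ∑ k ∈ range n, 3 * 8 ^ k
      = ∑ k ∈ range n, d k / 4 * 8 ^ k := by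
    have hdigit : ∀ k ∈ range n, (∑ i ∈ range n, d i / 2 * 8 ^ i) / 8 ^ k % 8 = d k / 2 :=
      fun k hk => sum_mul_pow_div_pow_mod (fun i => by have := hd8 i; omega) (mem_range.1 hk)
    rw [hhalf, shiftRight_one_and_sum_three_mul_eight_pow
      (sum_mul_pow_lt (fun i => by have := hd8 i; omega) n)]
    refine sum_congr rfl fun k hk => ?_
    rw [hdigit k hk, Nat.div_div_eq_div_mul]
  calc _ = ∑ k ∈ range n, d k * 8 ^ k - ∑ k ∈ range n, d k / 2 * 8 ^ k
        - ∑ k ∈ range n, d k / 4 * 8 ^ k := by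
        rw [hquarter, hhalf, sum_div_pow_mod_mul_pow (by norm_num) hx]
    _ = ∑ k ∈ range n, (d k * 8 ^ k - d k / 2 * 8 ^ k - d k / 4 * 8 ^ k) := by
        rw [sum_tsub_distrib _ fun k _ => ?_, sum_tsub_distrib _ fun k _ => ?_]
        · exact Nat.mul_le_mul_right _ (Nat.div_le_self _ _)
        · rw [← Nat.sub_mul]; exact Nat.mul_le_mul_right _ (by omega)
    _ = _ := sum_congr rfl fun k _ => by
        rw [nu_eq_sub_div_two_sub_div_four _ (hd8 k), Nat.sub_mul, Nat.sub_mul]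

theorem add_shiftRight_three_and_sum_seven_mul_sixty_four_pow {n a : ℕ} {c : ℕ → ℕ}
    (hc : ∀ k, c k < 4) (hc0 : c (2 * n) = 0) (ha : a = ∑ k ∈ range (2 * n), c k * 8 ^ k) :
    (a + (a >>> 3)) &&& ∑ j ∈ range n, 7 * 64 ^ j
      = ∑ j ∈ range n, (c (2 * j) + c (2 * j + 1)) * 64 ^ j := by
  have hshift : a >>> 3 = ∑ k ∈ range (2 * n), c (k + 1) * 8 ^ k := by
    rw [Nat.shiftRight_eq_div_pow,
      ← sum_range_succ_mul_pow_div (fun k => (hc k).trans_le (by norm_num)),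
      sum_range_succ, hc0, zero_mul, add_zero, ha]
  have hsum : a + (a >>> 3) = ∑ j ∈ range n,
      (c (2 * j) + c (2 * j + 1) + 8 * (c (2 * j + 1) + c (2 * j + 2))) * 64 ^ j := by
    rw [hshift, ha, ← sum_add_distrib, sum_range_two_mul]
    refine sum_congr rfl fun j _ => ?_
    rw [pow_succ, pow_mul]
    ring
  rw [hsum, sum_mul_pow_and_sum_mul_pow (show 64 = 2 ^ 6 by norm_num)
    (fun j => by have := hc (2 * j); have := hc (2 * j + 1); have := hc (2 * j + 2); omega)
    (fun _ => by norm_num)]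
  refine sum_congr rfl fun j _ => ?_
  have hand : ∀ w, w &&& 7 = w % 8 := fun w => Nat.and_two_pow_sub_one_eq_mod w 3
  rw [hand]
  congr 1
  have := hc (2 * j); have := hc (2 * j + 1)
  omega

theorem stmt_19 (x : ℕ) (hx : x < 2 ^ 62)
    (T : ℕ) (hT : T = ∑ k ∈ Finset.range 21, 3 * 8 ^ k)
    (H : ℕ) (hH : H = ∑ k ∈ Finset.range 11, 7 * 64 ^ k) :
    (((x - ((x >>> 1) &&& T)) - ((((x >>> 1) &&& T) >>> 1) &&& T)) +
        (((x - ((x >>> 1) &&& T)) - ((((x >>> 1) &&& T) >>> 1) &&& T)) >>> 3)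
          &&& H) % 63 = nu x := by
  subst hT hH
  have hx21 : x < 8 ^ 21 := hx.trans_le (by norm_num)
  set c : ℕ → ℕ := fun k => nu (x / 8 ^ k % 8)
  have hc : ∀ k, c k < 4 := fun k =>
    Nat.lt_succ_of_le (nu_le_of_lt_two_pow (m := 3) (Nat.mod_lt _ (by norm_num)))
  have hc0 : ∀ k, 21 ≤ k → c k = 0 := fun k hk => by
    simp [c, Nat.div_eq_of_lt (hx21.trans_le (Nat.pow_le_pow_right (by norm_num) hk)), nu]
  have hsideways : x - ((x >>> 1) &&& ∑ k ∈ range 21, 3 * 8 ^ k)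
      - ((((x >>> 1) &&& ∑ k ∈ range 21, 3 * 8 ^ k) >>> 1) &&& ∑ k ∈ range 21, 3 * 8 ^ k)
      = ∑ k ∈ range (2 * 11), c k * 8 ^ k := by
    rw [sub_shiftRight_and_sub_eq_sum_nu_digit_mul hx21, sum_range_succ _ 21, hc0 21 le_rfl,
      zero_mul, add_zero]
  have hnu : nu x = ∑ k ∈ range (2 * 11), c k :=
    nu_eq_sum_nu_digit (show 8 = 2 ^ 3 by norm_num) (hx21.trans (by norm_num))
  rw [add_shiftRight_three_and_sum_seven_mul_sixty_four_pow hc (hc0 _ (by norm_num)) hsideways]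
  calc _ = (∑ j ∈ range 11, (c (2 * j) + c (2 * j + 1))) % 63 :=
        sum_mul_pow_modEq_sum (B := 64) (by norm_num) _ _
    _ = nu x % 63 := by rw [hnu, sum_range_two_mul]
    _ = nu x := Nat.mod_eq_of_lt ((nu_le_of_lt_two_pow hx).trans_lt (by norm_num))
end
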